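/- Let (Ω, A, P) be a probability space, (S, 𝔖) and (T, 𝔗) measurable spaces, and (X, Y) : Ω → S × T measurable. Assume the joint law P_{(X,Y)} is absolutely continuous with respect to the product of the marginals P_X ⊗ P_Y, with Radon–Nikodým derivative g = dP_{(X,Y)}/d(P_X ⊗ P_Y) essentially bounded: ‖g‖_{∞, P_X⊗P_Y} < ∞. Let H be a separable Hilbert space with norm ‖·‖, and let F : S × T → H be measurable and square-integrable with respect to the product measure, ‖F‖²_{2, P_X⊗P_Y} = ∫ ‖F(x,y)‖² d(P_X ⊗ P_Y)(x,y) < ∞. Then ‖∫_{S×T} F dP_{(X,Y)} − ∫_{S×T} F d(P_X ⊗ P_Y)‖ ≤ 2^{1/2} (1 + ‖g‖_{∞, P_X⊗P_Y})^{1/2} ‖F‖_{2, P_X⊗P_Y} β(X,Y)^{1/2}. -/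

import Mathlib

/-!
Under the joint law the integral of `F` is `∫ g • F` against `P_X ⊗ P_Y`, so the difference is
`∫ (g - 1) • F`. Splitting `|g - 1| ‖F‖ = √|g - 1| · (√|g - 1| ‖F‖)` and applying Cauchy–Schwarz
bounds its norm by `(∫ |g - 1|)^{1/2} (∫ |g - 1| ‖F‖²)^{1/2}`; the first factor is `(2β)^{1/2}`,
and `|g - 1| ≤ 1 + ‖g‖_∞` bounds the second.
-/

open MeasureTheory

section
variable {α E : Type*} [MeasurableSpace α] {μ : Measure α} [NormedAddCommGroup E] [NormedSpace ℝ E]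

theorem integral_withDensity_ofReal_eq_integral_smul {g : α → ℝ} (hg : Measurable g)
    (hg0 : ∀ x, 0 ≤ g x) (F : α → E) :
    ∫ x, F x ∂μ.withDensity (fun x => ENNReal.ofReal (g x)) = ∫ x, g x • F x ∂μ := by
  rw [integral_withDensity_eq_integral_toReal_smul hg.ennreal_ofReal
    (ae_of_all _ fun _ => ENNReal.ofReal_lt_top)]
  simp only [ENNReal.toReal_ofReal (hg0 _)]

theorem abs_sub_one_le_of_abs_le {a C : ℝ} (h : |a| ≤ C) : |a - 1| ≤ 1 + C := by
  have := abs_sub a 1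
  rw [abs_one] at this
  linarith

theorem integral_abs_sub_one_mul_le {g f : α → ℝ} {C : ℝ} (hgC : ∀ᵐ x ∂μ, |g x| ≤ C)
    (hf : Integrable f μ) (hf0 : 0 ≤ f) :
    ∫ x, |g x - 1| * f x ∂μ ≤ (1 + C) * ∫ x, f x ∂μ := by
  rw [← integral_const_mul]
  exact integral_mono_of_nonneg (ae_of_all _ fun x => mul_nonneg (abs_nonneg _) (hf0 x))
    (hf.const_mul _) (hgC.mono fun x hx => mul_le_mul_of_nonneg_right
      (abs_sub_one_le_of_abs_le hx) (hf0 x))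

theorem norm_integral_smul_le_rpow_half_mul_rpow_half {h : α → ℝ} {F : α → E} (hh : Integrable h μ)
    (hF : AEStronglyMeasurable F μ) (hhF : Integrable (fun x => |h x| * ‖F x‖ ^ 2) μ) :
    ‖∫ x, h x • F x ∂μ‖ ≤
      (∫ x, |h x| ∂μ) ^ (1 / 2 : ℝ) * (∫ x, |h x| * ‖F x‖ ^ 2 ∂μ) ^ (1 / 2 : ℝ) := by
  have hsqrt : AEStronglyMeasurable (fun x => √|h x|) μ :=
    hh.aestronglyMeasurable.aemeasurable.abs.sqrt.aestronglyMeasurable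
  have h₁ : MemLp (fun x => √|h x|) (ENNReal.ofReal 2) μ := by
    rw [ENNReal.ofReal_ofNat, memLp_two_iff_integrable_sq hsqrt]
    simpa only [Real.sq_sqrt (abs_nonneg _)] using hh.abs
  have h₂ : MemLp (fun x => √|h x| * ‖F x‖) (ENNReal.ofReal 2) μ := by
    have hmeas : AEStronglyMeasurable (fun x => √|h x| * ‖F x‖) μ := hsqrt.mul hF.norm
    rw [ENNReal.ofReal_ofNat, memLp_two_iff_integrable_sq hmeas]
    simpa only [mul_pow, Real.sq_sqrt (abs_nonneg _)] using hhF
  have hCS := integral_mul_le_Lp_mul_Lq_of_nonneg Real.HolderConjugate.two_two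
    (ae_of_all _ fun x => Real.sqrt_nonneg _)
    (ae_of_all _ fun x => mul_nonneg (Real.sqrt_nonneg _) (norm_nonneg _)) h₁ h₂
  simp only [Real.rpow_two, mul_pow, ← mul_assoc, Real.sq_sqrt (abs_nonneg _),
    Real.mul_self_sqrt (abs_nonneg _)] at hCS
  calc ‖∫ x, h x • F x ∂μ‖ ≤ ∫ x, ‖h x • F x‖ ∂μ := norm_integral_le_integral_norm _
    _ = ∫ x, |h x| * ‖F x‖ ∂μ := by simp only [norm_smul, Real.norm_eq_abs]
    _ ≤ _ := hCS

end

theorem stmt_19_general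
    {Ω S T : Type*} [MeasurableSpace Ω] [MeasurableSpace S] [MeasurableSpace T]
    (P : Measure Ω) [IsProbabilityMeasure P]
    (X : Ω → S) (Y : Ω → T) (hX : Measurable X) (hY : Measurable Y)
    {H : Type*} [NormedAddCommGroup H] [InnerProductSpace ℝ H]
    [SecondCountableTopology H] [MeasurableSpace H] [BorelSpace H]
    (F : S × T → H) (hF : Measurable F)
    (g : S × T → ℝ) (hg : Measurable g) (hg0 : ∀ p, 0 ≤ g p)
    (hjoint : P.map (fun ω => (X ω, Y ω)) =
      ((P.map X).prod (P.map Y)).withDensity fun p => ENNReal.ofReal (g p))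
    (Cg : ℝ) (hCg : ∀ᵐ p ∂(P.map X).prod (P.map Y), |g p| ≤ Cg)
    (hF2 : Integrable (fun p => ‖F p‖ ^ 2) ((P.map X).prod (P.map Y)))
    (β : ℝ) (hβ : β = 1 / 2 * ∫ p, |g p - 1| ∂(P.map X).prod (P.map Y)) :
    ‖(∫ p, F p ∂P.map fun ω => (X ω, Y ω)) - ∫ p, F p ∂(P.map X).prod (P.map Y)‖ ≤
      Real.sqrt 2 * (1 + Cg) ^ ((1 : ℝ) / 2) *
        (∫ p, ‖F p‖ ^ 2 ∂(P.map X).prod (P.map Y)) ^ ((1 : ℝ) / 2) * β ^ ((1 : ℝ) / 2) := by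
  set μ := (P.map X).prod (P.map Y)
  have : IsProbabilityMeasure (P.map X) := Measure.isProbabilityMeasure_map hX.aemeasurable
  have : IsProbabilityMeasure (P.map Y) := Measure.isProbabilityMeasure_map hY.aemeasurable
  have hCg0 : 0 ≤ Cg := (abs_nonneg _).trans hCg.exists.choose_spec
  have hg1C : ∀ᵐ p ∂μ, ‖g p - 1‖ ≤ 1 + Cg := hCg.mono fun p hp => abs_sub_one_le_of_abs_le hp
  have hFi : Integrable F μ :=
    ((memLp_two_iff_integrable_sq_norm hF.aestronglyMeasurable).2 hF2).integrable (by norm_num)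
  have hg1 : AEStronglyMeasurable (fun p => g p - 1) μ := (hg.sub_const 1).aestronglyMeasurable
  have hweighted : Integrable (fun p => |g p - 1| * ‖F p‖ ^ 2) μ :=
    hF2.bdd_mul hg1.norm (by simpa only [norm_abs_eq_norm] using hg1C)
  have hβ2 : ∫ p, |g p - 1| ∂μ = 2 * β := by rw [hβ]; ring
  have hβ0 : 0 ≤ β := by rw [hβ]; positivity
  calc ‖(∫ p, F p ∂P.map fun ω => (X ω, Y ω)) - ∫ p, F p ∂μ‖
      = ‖∫ p, (g p - 1) • F p ∂μ‖ := by
        rw [hjoint, integral_withDensity_ofReal_eq_integral_smul hg hg0, ← integral_sub]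
        · simp only [sub_smul, one_smul]
        · exact hFi.bdd_smul Cg hg.aestronglyMeasurable hCg
        · exact hFi
    _ ≤ (∫ p, |g p - 1| ∂μ) ^ (1 / 2 : ℝ) * (∫ p, |g p - 1| * ‖F p‖ ^ 2 ∂μ) ^ (1 / 2 : ℝ) :=
        norm_integral_smul_le_rpow_half_mul_rpow_half (.of_bound hg1 _ hg1C)
          hF.aestronglyMeasurable hweighted
    _ ≤ (2 * β) ^ (1 / 2 : ℝ) * ((1 + Cg) * ∫ p, ‖F p‖ ^ 2 ∂μ) ^ (1 / 2 : ℝ) := by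
        rw [hβ2]
        gcongr
        exact integral_abs_sub_one_mul_le hCg hF2 fun p => by positivity
    _ = _ := by
        rw [Real.mul_rpow (by norm_num) hβ0, Real.mul_rpow (by linarith) (by positivity),
          Real.sqrt_eq_rpow]
        ring

theorem stmt_19
    {Ω S T : Type*} [MeasurableSpace Ω] [MeasurableSpace S] [MeasurableSpace T]
    (P : Measure Ω) [IsProbabilityMeasure P]
    (X : Ω → S) (Y : Ω → T) (hX : Measurable X) (hY : Measurable Y)
    {H : Type*} [NormedAddCommGroup H] [InnerProductSpace ℝ H] [CompleteSpace H]
    [SecondCountableTopology H] [MeasurableSpace H] [BorelSpace H]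
    (F : S × T → H) (hF : Measurable F)
    (g : S × T → ℝ) (hg : Measurable g) (hg0 : ∀ p, 0 ≤ g p)
    (hjoint : P.map (fun ω => (X ω, Y ω)) =
      ((P.map X).prod (P.map Y)).withDensity fun p => ENNReal.ofReal (g p))
    (Cg : ℝ) (hCg : ∀ᵐ p ∂(P.map X).prod (P.map Y), |g p| ≤ Cg)
    (hF2 : Integrable (fun p => ‖F p‖ ^ 2) ((P.map X).prod (P.map Y)))
    (β : ℝ) (hβ : β = 1 / 2 * ∫ p, |g p - 1| ∂(P.map X).prod (P.map Y)) :
    ‖(∫ p, F p ∂P.map fun ω => (X ω, Y ω)) - ∫ p, F p ∂(P.map X).prod (P.map Y)‖ ≤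
      Real.sqrt 2 * (1 + Cg) ^ ((1 : ℝ) / 2) *
        (∫ p, ‖F p‖ ^ 2 ∂(P.map X).prod (P.map Y)) ^ ((1 : ℝ) / 2) * β ^ ((1 : ℝ) / 2) :=
  stmt_19_general P X Y hX hY F hF g hg hg0 hjoint Cg hCg hF2 β hβ
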